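/- Let m >= 1 and let x_i = 1 for 1 <= i <= m and x_i = -1 for m+1 <= i <= 2m. Then the average over all (2m)! permutations sigma of max_{1<=k<=2m-1} | (sum_{i=1}^k x_{sigma(i)})^2 - k(2m-k)/(2m-1) |^2 is at most 128 m^2. -/

import Mathlib

open MeasureTheory Finset

noncomputable section

instance permMS (n : ℕ) : MeasurableSpace (Equiv.Perm (Fin n)) := ⊤

instance permNE (n : ℕ) : Nonempty (Equiv.Perm (Fin n)) := ⟨1⟩

/-- uniform probability measure on the n! orderings: sampling without replacement. -/
def permMeasure (n : ℕ) : Measure (Equiv.Perm (Fin n)) :=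
  (PMF.uniformOfFintype (Equiv.Perm (Fin n))).toMeasure

/-- `X n x i σ` : the `(i+1)`-st sample (0-based `i`) drawn without replacement. -/
def X (n : ℕ) (x : Fin n → ℝ) (i : ℕ) (σ : Equiv.Perm (Fin n)) : ℝ :=
  if h : i < n then x (σ ⟨i, h⟩) else 0

/-- partial sum `S_k = X_1 + ⋯ + X_k`. -/
def S (n : ℕ) (x : Fin n → ℝ) (k : ℕ) (σ : Equiv.Perm (Fin n)) : ℝ :=
  ∑ i ∈ Finset.range k, X n x i σ

/-- partial sum of squares `T_k = X_1^2 + ⋯ + X_k^2`. -/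
def T (n : ℕ) (x : Fin n → ℝ) (k : ℕ) (σ : Equiv.Perm (Fin n)) : ℝ :=
  ∑ i ∈ Finset.range k, (X n x i σ) ^ 2

/-- `F_k = σ(X_1, ..., X_k)`. -/
def F (n : ℕ) (x : Fin n → ℝ) (k : ℕ) : MeasurableSpace (Equiv.Perm (Fin n)) :=
  MeasurableSpace.comap (fun σ => fun i : Fin k => X n x i σ) inferInstance

/-!
Write `S_k` for the partial sums of a uniformly random ordering of the `n = 2m` signs. Since the
signs sum to zero, `E[X_{k+1} | F_k] = -S_k / (n - k)`, hence
`E[S_{k+1}^2 | F_k] = (n - k - 2) / (n - k) · S_k^2 + 1`, and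
`M_k = (S_k^2 - E S_k^2) / ((n - k)(n - k - 1))` is a martingale. For `k ≤ m` the deviation
`(S_k^2 - E S_k^2)^2` is at most `((n - 1)(n - 2))^2 M_k^2`, so Doob's L² inequality bounds the
expected maximum over `k ≤ m` by `4 ((n - 1)(n - 2))^2 E M_m^2`, and `E M_m^2` is the variance of
`S_m^2` over `(m (m - 1))^2`, computed from the analogous recursion for `E S_k^4`. Reversing the
ordering turns `S_k` into `-S_{n-k}` and so handles `k ≥ m`.
-/

/-- Stands in for measurability with respect to the first `k` draws. -/
def TailInvariant (n k : ℕ) (φ : Equiv.Perm (Fin n) → ℝ) : Prop :=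
  ∀ (σ : Equiv.Perm (Fin n)) (a b : Fin n), k ≤ a → k ≤ b →
    φ (σ * Equiv.swap a b) = φ σ

namespace TailInvariant

variable {n k : ℕ} {φ ψ : Equiv.Perm (Fin n) → ℝ}

lemma comp (g : ℝ → ℝ) (hφ : TailInvariant n k φ) : TailInvariant n k (g ∘ φ) :=
  fun σ a b ha hb => congrArg g (hφ σ a b ha hb)

lemma mul (hφ : TailInvariant n k φ) (hψ : TailInvariant n k ψ) :
    TailInvariant n k (φ * ψ) :=
  fun σ a b ha hb => by simp only [Pi.mul_apply, hφ σ a b ha hb, hψ σ a b ha hb]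

lemma partialSups_abs {f : ℕ → Equiv.Perm (Fin n) → ℝ}
    (hf : ∀ j ≤ k, TailInvariant n k (f j)) :
    TailInvariant n k fun σ => partialSups (fun j => |f j σ|) k := fun σ a b ha hb => by
  simp only [partialSups_apply]
  exact sup'_congr _ rfl fun j hj => by rw [hf j (mem_Iic.mp hj) σ a b ha hb]

end TailInvariant

lemma partialSups_abs_sq_add_le (a : ℕ → ℝ) (K : ℕ) :
    partialSups (fun j => |a j|) K ^ 2
      + 2 * ∑ j ∈ range K, partialSups (fun j => |a j|) j * (|a (j + 1)| - |a j|)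
      ≤ 2 * |a K| * partialSups (fun j => |a j|) K := by
  induction K with
  | zero => simp only [partialSups_zero, range_zero, sum_empty]; nlinarith [abs_nonneg (a 0)]
  | succ K ih =>
    set R := partialSups (fun j => |a j|)
    have hR : R (K + 1) = max (R K) |a (K + 1)| := partialSups_add_one _ _
    have hstep : R (K + 1) ^ 2 - R K ^ 2 ≤ 2 * |a (K + 1)| * (R (K + 1) - R K) := by
      rcases max_cases (R K) |a (K + 1)| with ⟨hmax, -⟩ | ⟨hmax, hlt⟩ <;> rw [hR, hmax]
      · simp
      · nlinarith [(abs_nonneg (a K)).trans (le_partialSups (fun j => |a j|) K)]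
    rw [sum_range_succ]
    nlinarith

/-- Doob's L² inequality, with the submartingale property of `|a|` tested only against its
running maximum. -/
lemma sum_sq_partialSups_abs_le {ι : Type*} (s : Finset ι) (a : ℕ → ι → ℝ) (K : ℕ)
    (hsub : ∀ j < K,
      0 ≤ ∑ i ∈ s, partialSups (fun l => |a l i|) j * (|a (j + 1) i| - |a j i|)) :
    ∑ i ∈ s, partialSups (fun l => |a l i|) K ^ 2 ≤ 4 * ∑ i ∈ s, a K i ^ 2 := by
  set R := fun i => partialSups (fun l => |a l i|) K
  have hpath : ∑ i ∈ s, R i ^ 2 ≤ 2 * ∑ i ∈ s, |a K i| * R i := by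
    have hsum := sum_le_sum fun i (_ : i ∈ s) => partialSups_abs_sq_add_le (fun l => a l i) K
    have hnonneg : 0 ≤ ∑ j ∈ range K, ∑ i ∈ s,
        partialSups (fun l => |a l i|) j * (|a (j + 1) i| - |a j i|) :=
      sum_nonneg fun j hj => hsub j (mem_range.mp hj)
    rw [sum_add_distrib, ← mul_sum, sum_comm] at hsum
    simp only [mul_assoc, ← mul_sum] at hsum
    linarith
  have hcs := sum_mul_sq_le_sq_mul_sq s (fun i => |a K i|) R
  simp only [sq_abs] at hcs
  nlinarith [sum_nonneg fun i (_ : i ∈ s) => sq_nonneg (R i),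
    sum_nonneg fun i (_ : i ∈ s) => sq_nonneg (a K i)]

/-- `|·|` of a martingale is a submartingale: test the martingale property against
`sign a · r`. -/
lemma sum_mul_abs_sub_abs_nonneg {ι : Type*} (s : Finset ι) (a b r : ι → ℝ)
    (hr : ∀ i ∈ s, 0 ≤ r i)
    (hmart : ∑ i ∈ s, b i * (SignType.sign (a i) * r i)
      = ∑ i ∈ s, a i * (SignType.sign (a i) * r i)) :
    0 ≤ ∑ i ∈ s, r i * (|b i| - |a i|) := by
  have hb : ∀ i ∈ s, b i * (SignType.sign (a i) * r i) ≤ |b i| * r i := fun i hi => by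
    rw [← mul_assoc]
    refine mul_le_mul_of_nonneg_right ?_ (hr i hi)
    rcases lt_trichotomy (a i) 0 with h | h | h <;> simp [h, neg_le_abs, le_abs_self]
  have ha : ∀ i, a i * (SignType.sign (a i) * r i) = |a i| * r i := fun i => by
    rw [← mul_assoc, self_mul_sign]
  have hle : ∑ i ∈ s, |a i| * r i ≤ ∑ i ∈ s, |b i| * r i := by
    simpa only [hmart, ha] using sum_le_sum hb
  have hdiff : ∑ i ∈ s, r i * (|b i| - |a i|)
      = ∑ i ∈ s, |b i| * r i - ∑ i ∈ s, |a i| * r i := by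
    rw [← sum_sub_distrib]
    exact sum_congr rfl fun i _ => by ring
  linarith

section Sampling

variable {n : ℕ} {x : Fin n → ℝ}

lemma X_of_lt {i : ℕ} (h : i < n) (σ : Equiv.Perm (Fin n)) : X n x i σ = x (σ ⟨i, h⟩) :=
  dif_pos h

lemma S_succ (k : ℕ) (σ : Equiv.Perm (Fin n)) : S n x (k + 1) σ = S n x k σ + X n x k σ :=
  sum_range_succ _ _

lemma S_add_sum_Ico {k : ℕ} (hk : k ≤ n) (σ : Equiv.Perm (Fin n)) :
    S n x k σ + ∑ j ∈ Ico k n, X n x j σ = ∑ i, x i := by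
  rw [S, sum_range_add_sum_Ico _ hk, ← Fin.sum_univ_eq_sum_range (fun j => X n x j σ),
    ← Equiv.sum_comp σ x]
  exact sum_congr rfl fun i _ => X_of_lt i.isLt σ

lemma S_eq_sum_filter {k : ℕ} (hk : k ≤ n) (σ : Equiv.Perm (Fin n)) :
    S n x k σ = ∑ i ∈ univ.filter fun i : Fin n => (i : ℕ) < k, x (σ i) := by
  have hfilter : (range n).filter (· < k) = range k := by
    ext j
    simp only [mem_filter, mem_range]
    omega
  rw [S, ← hfilter, sum_filter, sum_filter, ← Fin.sum_univ_eq_sum_range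
    (fun j => if j < k then X n x j σ else 0)]
  exact sum_congr rfl fun i _ => by rw [X_of_lt i.isLt]

lemma S_mul_swap {k : ℕ} {a b : Fin n} (ha : k ≤ a) (hb : k ≤ b) (σ : Equiv.Perm (Fin n)) :
    S n x k (σ * Equiv.swap a b) = S n x k σ := by
  refine sum_congr rfl fun i hi => ?_
  have hik : i < k := mem_range.mp hi
  have hin : i < n := by omega
  rw [X_of_lt hin, X_of_lt hin, Equiv.Perm.mul_apply,
    Equiv.swap_apply_of_ne_of_ne (Fin.ne_of_val_ne (by simp; omega))
      (Fin.ne_of_val_ne (by simp; omega))]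

lemma S_mul_revPerm {k : ℕ} (hk : k ≤ n) (σ : Equiv.Perm (Fin n)) :
    S n x k (σ * Fin.revPerm) = ∑ i, x i - S n x (n - k) σ := by
  rw [← S_add_sum_Ico (x := x) (Nat.sub_le n k) σ, add_sub_cancel_left, S]
  refine sum_nbij' (fun i => n - 1 - i) (fun i => n - 1 - i) ?_ ?_ ?_ ?_ ?_ <;>
    simp only [mem_range, mem_Ico] <;> try (intros; omega)
  intro i hi
  rw [X_of_lt (by omega), X_of_lt (by omega), Equiv.Perm.mul_apply]
  congr 2
  ext
  simp only [Fin.revPerm_apply, Fin.val_rev]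
  omega

lemma sum_perm_one : ∑ _σ : Equiv.Perm (Fin n), (1 : ℝ) = n.factorial := by
  simp [Fintype.card_perm]


lemma tailInvariant_S {j k : ℕ} (hjk : j ≤ k) : TailInvariant n k (S n x j) :=
  fun σ _ _ ha hb => S_mul_swap (hjk.trans ha) (hjk.trans hb) σ

lemma sum_X_mul_of_tailInvariant {k : ℕ} (hk : k < n) {φ : Equiv.Perm (Fin n) → ℝ}
    (hφ : TailInvariant n k φ) :
    ((n : ℝ) - k) * ∑ σ, X n x k σ * φ σ = ∑ σ, (∑ i, x i - S n x k σ) * φ σ := by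
  have swap_draw : ∀ j ∈ Ico k n, ∑ σ, X n x j σ * φ σ = ∑ σ, X n x k σ * φ σ := by
    intro j hj
    obtain ⟨hkj, hjn⟩ := mem_Ico.mp hj
    refine Fintype.sum_equiv (Equiv.mulRight (Equiv.swap ⟨k, hk⟩ ⟨j, hjn⟩)) _ _ fun σ => ?_
    rw [Equiv.coe_mulRight, hφ σ _ _ le_rfl hkj, X_of_lt hk, Equiv.Perm.mul_apply,
      Equiv.swap_apply_left, X_of_lt hjn]
  calc ((n : ℝ) - k) * ∑ σ, X n x k σ * φ σ
      = ∑ j ∈ Ico k n, ∑ σ, X n x j σ * φ σ := by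
        rw [sum_congr rfl swap_draw, sum_const, Nat.card_Ico, nsmul_eq_mul,
          Nat.cast_sub hk.le]
    _ = ∑ σ, (∑ i, x i - S n x k σ) * φ σ := by
        rw [sum_comm]
        refine sum_congr rfl fun σ _ => ?_
        rw [← sum_mul, ← S_add_sum_Ico hk.le σ, add_sub_cancel_left]

def meanSq (n k : ℕ) : ℝ := k * ((n : ℝ) - k) / ((n : ℝ) - 1)

def meanFourth (n k : ℕ) : ℝ :=
  k + 3 * k * ((k : ℝ) - 1)
    - (4 * k * ((k : ℝ) - 1) + 6 * k * ((k : ℝ) - 1) * ((k : ℝ) - 2)) / ((n : ℝ) - 1)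
    + 3 * k * ((k : ℝ) - 1) * ((k : ℝ) - 2) * ((k : ℝ) - 3)
      / (((n : ℝ) - 1) * ((n : ℝ) - 3))

lemma meanSq_sub {k : ℕ} (hk : k ≤ n) : meanSq n (n - k) = meanSq n k := by
  rw [meanSq, meanSq, Nat.cast_sub hk]
  ring

lemma meanSq_succ (hn : 2 ≤ n) (k : ℕ) :
    ((n : ℝ) - k) * meanSq n (k + 1) = ((n : ℝ) - k - 2) * meanSq n k + ((n : ℝ) - k) := by
  have : (n : ℝ) - 1 ≠ 0 := by
    have : (2 : ℝ) ≤ n := by exact_mod_cast hn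
    linarith
  rw [meanSq, meanSq]
  field_simp
  push_cast
  ring

/-- `S_k ^ 2` minus its mean, rescaled into a martingale. -/
def M (n : ℕ) (x : Fin n → ℝ) (k : ℕ) (σ : Equiv.Perm (Fin n)) : ℝ :=
  (S n x k σ ^ 2 - meanSq n k) / (((n : ℝ) - k) * ((n : ℝ) - k - 1))

def sqDev (n : ℕ) (x : Fin n → ℝ) (k : ℕ) (σ : Equiv.Perm (Fin n)) : ℝ :=
  (S n x k σ ^ 2 - meanSq n k) ^ 2

lemma X_sq (hsq : ∀ i, x i ^ 2 = 1) {k : ℕ} (hk : k < n) (σ : Equiv.Perm (Fin n)) :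
    X n x k σ ^ 2 = 1 := by
  rw [X_of_lt hk, hsq]

lemma sum_X_mul_of_sum_eq_zero (hsum : ∑ i, x i = 0) {k : ℕ} (hk : k < n)
    {φ : Equiv.Perm (Fin n) → ℝ} (hφ : TailInvariant n k φ) :
    ((n : ℝ) - k) * ∑ σ, X n x k σ * φ σ = -∑ σ, S n x k σ * φ σ := by
  simp [sum_X_mul_of_tailInvariant hk hφ, hsum]

lemma sum_X_mul_S_pow (hsum : ∑ i, x i = 0) {k : ℕ} (hk : k < n) (p : ℕ) :
    ((n : ℝ) - k) * ∑ σ, X n x k σ * S n x k σ ^ p = -∑ σ, S n x k σ ^ (p + 1) := by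
  simpa only [Function.comp_apply, ← pow_succ'] using
    sum_X_mul_of_sum_eq_zero hsum hk ((tailInvariant_S (x := x) le_rfl).comp (· ^ p))

lemma sum_S_succ_sq_mul (hsq : ∀ i, x i ^ 2 = 1) (hsum : ∑ i, x i = 0) {k : ℕ} (hk : k < n)
    {φ : Equiv.Perm (Fin n) → ℝ} (hφ : TailInvariant n k φ) :
    ((n : ℝ) - k) * ∑ σ, S n x (k + 1) σ ^ 2 * φ σ
      = ((n : ℝ) - k - 2) * ∑ σ, S n x k σ ^ 2 * φ σ + ((n : ℝ) - k) * ∑ σ, φ σ := by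
  have hcond : ((n : ℝ) - k) * ∑ σ, X n x k σ * (S n x k σ * φ σ)
      = -∑ σ, S n x k σ ^ 2 * φ σ := by
    simpa only [Pi.mul_apply, ← mul_assoc, ← sq] using
      sum_X_mul_of_sum_eq_zero hsum hk ((tailInvariant_S (x := x) le_rfl).mul hφ)
  have expand : ∀ σ, S n x (k + 1) σ ^ 2 * φ σ
      = S n x k σ ^ 2 * φ σ + 2 * (X n x k σ * (S n x k σ * φ σ)) + φ σ := fun σ => by
    rw [S_succ]
    linear_combination φ σ * X_sq hsq hk σ
  rw [sum_congr rfl fun σ _ => expand σ, sum_add_distrib, sum_add_distrib, ← mul_sum]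
  linear_combination 2 * hcond

lemma sum_S_succ_pow_four (hsq : ∀ i, x i ^ 2 = 1) (hsum : ∑ i, x i = 0) {k : ℕ}
    (hk : k < n) :
    ((n : ℝ) - k) * ∑ σ, S n x (k + 1) σ ^ 4
      = ((n : ℝ) - k - 4) * ∑ σ, S n x k σ ^ 4
        + (6 * ((n : ℝ) - k) - 4) * ∑ σ, S n x k σ ^ 2 + ((n : ℝ) - k) * n.factorial := by
  have expand : ∀ σ, S n x (k + 1) σ ^ 4
      = S n x k σ ^ 4 + 4 * (X n x k σ * S n x k σ ^ 3) + 6 * S n x k σ ^ 2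
        + 4 * (X n x k σ * S n x k σ ^ 1) + 1 := fun σ => by
    rw [S_succ]
    linear_combination (6 * S n x k σ ^ 2 + 4 * S n x k σ * X n x k σ + X n x k σ ^ 2 + 1)
      * X_sq hsq hk σ
  rw [sum_congr rfl fun σ _ => expand σ]
  simp only [sum_add_distrib, ← mul_sum, sum_perm_one]
  linear_combination 4 * sum_X_mul_S_pow hsum hk 3 + 4 * sum_X_mul_S_pow hsum hk 1

lemma sum_S_sq (hsq : ∀ i, x i ^ 2 = 1) (hsum : ∑ i, x i = 0) (hn : 2 ≤ n) {k : ℕ}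
    (hk : k ≤ n) : ∑ σ, S n x k σ ^ 2 = n.factorial * meanSq n k := by
  induction k with
  | zero => simp [S, meanSq]
  | succ k ih =>
    have hrec := sum_S_succ_sq_mul hsq hsum hk (φ := 1) fun _ _ _ _ _ => rfl
    simp only [Pi.one_apply, mul_one, sum_perm_one, ih (by omega)] at hrec
    have hkn : (k : ℝ) + 1 ≤ n := by exact_mod_cast hk
    refine mul_left_cancel₀ (by linarith : (n : ℝ) - k ≠ 0) (hrec.trans ?_)
    linear_combination (n.factorial : ℝ) * (meanSq_succ hn k).symm

lemma sum_S_pow_four (hsq : ∀ i, x i ^ 2 = 1) (hsum : ∑ i, x i = 0) (hn : 4 ≤ n) {k : ℕ}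
    (hk : k ≤ n) : ∑ σ, S n x k σ ^ 4 = n.factorial * meanFourth n k := by
  induction k with
  | zero => simp [S, meanFourth]
  | succ k ih =>
    have hrec := sum_S_succ_pow_four hsq hsum hk
    rw [ih (by omega), sum_S_sq hsq hsum (by omega) (by omega)] at hrec
    have hkn : (k : ℝ) + 1 ≤ n := by exact_mod_cast hk
    have : (4 : ℝ) ≤ n := by exact_mod_cast hn
    have hn1 : (n : ℝ) - 1 ≠ 0 := by linarith
    have hn3 : (n : ℝ) - 3 ≠ 0 := by linarith
    refine mul_left_cancel₀ (by linarith : (n : ℝ) - k ≠ 0) (hrec.trans ?_)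
    rw [meanSq, meanFourth, meanFourth]
    field_simp
    push_cast
    ring

lemma tailInvariant_M {j k : ℕ} (hjk : j ≤ k) : TailInvariant n k (M n x j) :=
  (tailInvariant_S hjk).comp fun s => (s ^ 2 - meanSq n j) / (((n : ℝ) - j) * ((n : ℝ) - j - 1))

lemma sum_M_mul (k : ℕ) (φ : Equiv.Perm (Fin n) → ℝ) :
    ∑ σ, M n x k σ * φ σ = (∑ σ, S n x k σ ^ 2 * φ σ - meanSq n k * ∑ σ, φ σ)
      / (((n : ℝ) - k) * ((n : ℝ) - k - 1)) := by
  simp only [M, div_mul_eq_mul_div, ← sum_div, sub_mul, sum_sub_distrib, mul_sum]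

lemma sum_M_succ_mul (hsq : ∀ i, x i ^ 2 = 1) (hsum : ∑ i, x i = 0) {k : ℕ} (hk : k + 2 < n)
    {φ : Equiv.Perm (Fin n) → ℝ} (hφ : TailInvariant n k φ) :
    ∑ σ, M n x (k + 1) σ * φ σ = ∑ σ, M n x k σ * φ σ := by
  have hrec := sum_S_succ_sq_mul hsq hsum (by omega) hφ
  have hmean := meanSq_succ (by omega : 2 ≤ n) k
  have hkn : (k : ℝ) + 2 < n := by exact_mod_cast hk
  rw [sum_M_mul, sum_M_mul, div_eq_div_iff (by push_cast; nlinarith) (by nlinarith)]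
  push_cast
  linear_combination ((n : ℝ) - k - 1) * hrec - ((n : ℝ) - k - 1) * (∑ σ, φ σ) * hmean

lemma sum_sq_partialSups_M_le (hsq : ∀ i, x i ^ 2 = 1) (hsum : ∑ i, x i = 0) {K : ℕ}
    (hK : K + 1 < n) :
    ∑ σ, partialSups (fun j => |M n x j σ|) K ^ 2 ≤ 4 * ∑ σ, M n x K σ ^ 2 := by
  refine sum_sq_partialSups_abs_le _ (M n x) K fun j hj => ?_
  refine sum_mul_abs_sub_abs_nonneg _ _ _ _
    (fun σ _ => (abs_nonneg _).trans (le_partialSups (fun l => |M n x l σ|) j)) ?_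
  refine sum_M_succ_mul hsq hsum (by omega) (φ := fun σ =>
    SignType.sign (M n x j σ) * partialSups (fun l => |M n x l σ|) j) ?_
  exact ((tailInvariant_M le_rfl).comp fun t => (SignType.sign t : ℝ)).mul
    (TailInvariant.partialSups_abs (f := M n x) fun l hl => tailInvariant_M hl)

lemma sum_M_sq (hsq : ∀ i, x i ^ 2 = 1) (hsum : ∑ i, x i = 0) (hn : 4 ≤ n) {k : ℕ}
    (hk : k ≤ n) :
    ∑ σ, M n x k σ ^ 2 = n.factorial * (meanFourth n k - meanSq n k ^ 2)
      / (((n : ℝ) - k) * ((n : ℝ) - k - 1)) ^ 2 := by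
  have expand : ∀ σ, (S n x k σ ^ 2 - meanSq n k) ^ 2
      = S n x k σ ^ 4 - 2 * meanSq n k * S n x k σ ^ 2 + meanSq n k ^ 2 * 1 := fun σ => by ring
  simp only [M, div_pow, ← sum_div, expand, sum_add_distrib, sum_sub_distrib, ← mul_sum,
    sum_S_pow_four hsq hsum hn hk, sum_S_sq hsq hsum (by omega) hk, sum_perm_one]
  ring

lemma sqDev_one (hsq : ∀ i, x i ^ 2 = 1) (hn : 2 ≤ n) (σ : Equiv.Perm (Fin n)) :
    sqDev n x 1 σ = 0 := by
  have : (n : ℝ) - 1 ≠ 0 := by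
    have : (2 : ℝ) ≤ n := by exact_mod_cast hn
    linarith
  have hS : S n x 1 σ = X n x 0 σ := by simp [S]
  rw [sqDev, hS, X_sq hsq (by omega), meanSq, Nat.cast_one, one_mul, div_self this]
  norm_num

lemma sqDev_mul_revPerm (hsum : ∑ i, x i = 0) {k : ℕ} (hk : k ≤ n) (σ : Equiv.Perm (Fin n)) :
    sqDev n x k (σ * Fin.revPerm) = sqDev n x (n - k) σ := by
  rw [sqDev, sqDev, S_mul_revPerm hk, hsum, zero_sub, neg_sq, meanSq_sub hk]

lemma sqDev_eq_M_sq {k : ℕ} (hk : k + 1 < n) (σ : Equiv.Perm (Fin n)) :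
    sqDev n x k σ = M n x k σ ^ 2 * (((n : ℝ) - k) * ((n : ℝ) - k - 1)) ^ 2 := by
  have hkn : (k : ℝ) + 1 < n := by exact_mod_cast hk
  rw [sqDev, M, div_pow, div_mul_cancel₀ _ (pow_ne_zero 2 (by nlinarith))]

lemma sqDev_le_partialSups {k K : ℕ} (hk : 1 ≤ k) (hkK : k ≤ K) (hK : K + 1 < n)
    (σ : Equiv.Perm (Fin n)) :
    sqDev n x k σ
      ≤ (((n : ℝ) - 1) * ((n : ℝ) - 2)) ^ 2 * partialSups (fun j => |M n x j σ|) K ^ 2 := by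
  have hk1 : (1 : ℝ) ≤ k := by exact_mod_cast hk
  have hkn : (k : ℝ) + 1 < n := by exact_mod_cast (by omega : k + 1 < n)
  have hM : M n x k σ ^ 2 ≤ partialSups (fun j => |M n x j σ|) K ^ 2 := by
    rw [← sq_abs]
    exact pow_le_pow_left₀ (abs_nonneg _) (le_partialSups_of_le (fun j => |M n x j σ|) hkK) 2
  have hd :
      (((n : ℝ) - k) * ((n : ℝ) - k - 1)) ^ 2 ≤ (((n : ℝ) - 1) * ((n : ℝ) - 2)) ^ 2 :=
    pow_le_pow_left₀ (by nlinarith) (by nlinarith) 2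
  rw [sqDev_eq_M_sq (by omega), mul_comm (_ ^ 2)]
  exact mul_le_mul hd hM (sq_nonneg _) (sq_nonneg _)

end Sampling

lemma sum_ite_lt_eq_zero (m : ℕ) :
    ∑ i : Fin (2 * m), (if (i : ℕ) < m then (1 : ℝ) else -1) = 0 := by
  rw [Fin.sum_univ_eq_sum_range (fun i => if i < m then (1 : ℝ) else -1), two_mul, sum_range_add,
    sum_congr rfl fun i hi => if_pos (mem_range.mp hi),
    sum_congr rfl fun i _ => if_neg (by omega : ¬m + i < m)]
  simp

lemma two_mul_sub_one_sq_mul_variance_le {m : ℕ} (hm : 2 ≤ m) :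
    (2 * (m : ℝ) - 1) ^ 2 * (meanFourth (2 * m) m - meanSq (2 * m) m ^ 2)
      ≤ 4 * (m : ℝ) ^ 4 := by
  have hm' : (2 : ℝ) ≤ m := by exact_mod_cast hm
  have h1 : (m : ℝ) * 2 - 1 ≠ 0 := by linarith
  have h3 : (m : ℝ) * 2 - 3 ≠ 0 := by linarith
  have hgap : 4 * (m : ℝ) ^ 4
      - (2 * (m : ℝ) - 1) ^ 2 * (meanFourth (2 * m) m - meanSq (2 * m) m ^ 2)
      = 4 * (m : ℝ) ^ 3 * ((m : ℝ) ^ 2 - m - 1) / (2 * (m : ℝ) - 3) := by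
    rw [meanFourth, meanSq]
    push_cast
    field_simp
    ring
  have : 0 ≤ 4 * (m : ℝ) ^ 3 * ((m : ℝ) ^ 2 - m - 1) / (2 * (m : ℝ) - 3) :=
    div_nonneg (mul_nonneg (by positivity) (by nlinarith)) (by linarith)
  linarith

section Halves

variable {m : ℕ} {x : Fin (2 * m) → ℝ}

lemma sqDev_le_partialSups_add_revPerm (hsum : ∑ i, x i = 0) (hm : 2 ≤ m) {k : ℕ}
    (hk : k ∈ Icc 1 (2 * m - 1)) (σ : Equiv.Perm (Fin (2 * m))) :
    sqDev (2 * m) x k σ ≤ ((((2 * m : ℕ) : ℝ) - 1) * (((2 * m : ℕ) : ℝ) - 2)) ^ 2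
      * (partialSups (fun j => |M (2 * m) x j σ|) m ^ 2
        + partialSups (fun j => |M (2 * m) x j (σ * Fin.revPerm)|) m ^ 2) := by
  obtain ⟨hk1, hk2⟩ := mem_Icc.mp hk
  rcases le_total k m with hkm | hmk
  · nlinarith [sqDev_le_partialSups (x := x) hk1 hkm (by omega) σ,
      sq_nonneg ((((2 * m : ℕ) : ℝ) - 1) * (((2 * m : ℕ) : ℝ) - 2)),
      sq_nonneg (partialSups (fun j => |M (2 * m) x j (σ * Fin.revPerm)|) m)]
  · have hrev := sqDev_mul_revPerm hsum (by omega : 2 * m - k ≤ 2 * m) σ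
    rw [Nat.sub_sub_self (by omega)] at hrev
    nlinarith [sqDev_le_partialSups (x := x) (by omega : 1 ≤ 2 * m - k)
        (by omega : 2 * m - k ≤ m) (by omega) (σ * Fin.revPerm),
      sq_nonneg ((((2 * m : ℕ) : ℝ) - 1) * (((2 * m : ℕ) : ℝ) - 2)),
      sq_nonneg (partialSups (fun j => |M (2 * m) x j σ|) m)]

lemma sum_sup_sqDev_le (hsq : ∀ i, x i ^ 2 = 1) (hsum : ∑ i, x i = 0) (hm : 2 ≤ m) :
    ∑ σ, (Icc 1 (2 * m - 1)).sup' (nonempty_Icc.mpr (by omega)) (fun k => sqDev (2 * m) x k σ)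
      ≤ 128 * (m : ℝ) ^ 2 * (2 * m).factorial := by
  set D := ((((2 * m : ℕ) : ℝ) - 1) * (((2 * m : ℕ) : ℝ) - 2)) ^ 2
  set R := fun σ => partialSups (fun j => |M (2 * m) x j σ|) m
  have hm' : (2 : ℝ) ≤ m := by exact_mod_cast hm
  calc ∑ σ, (Icc 1 (2 * m - 1)).sup' _ (fun k => sqDev (2 * m) x k σ)
      ≤ ∑ σ, D * (R σ ^ 2 + R (σ * Fin.revPerm) ^ 2) :=
        sum_le_sum fun σ _ => sup'_le _ _ fun k hk =>
          sqDev_le_partialSups_add_revPerm hsum hm hk σ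
    _ = 2 * D * ∑ σ, R σ ^ 2 := by
        have hrev : ∑ σ, R (σ * Fin.revPerm) ^ 2 = ∑ σ, R σ ^ 2 :=
          Equiv.sum_comp (Equiv.mulRight Fin.revPerm) fun τ => R τ ^ 2
        rw [← mul_sum, sum_add_distrib, hrev]
        ring
    _ ≤ 2 * D * (4 * ∑ σ, M (2 * m) x m σ ^ 2) := by
        gcongr
        exact sum_sq_partialSups_M_le hsq hsum (by omega)
    _ = 32 * (2 * m).factorial / (m : ℝ) ^ 2
          * ((2 * (m : ℝ) - 1) ^ 2 * (meanFourth (2 * m) m - meanSq (2 * m) m ^ 2)) := by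
        have hD : D = 4 * (2 * (m : ℝ) - 1) ^ 2 * ((m : ℝ) - 1) ^ 2 := by
          simp only [D]
          push_cast
          ring
        have hd : ((2 * m : ℕ) : ℝ) - m = m := by push_cast; ring
        have : (m : ℝ) - 1 ≠ 0 := by linarith
        rw [sum_M_sq hsq hsum (by omega) (by omega), hd, hD]
        field_simp
        ring
    _ ≤ 32 * (2 * m).factorial / (m : ℝ) ^ 2 * (4 * (m : ℝ) ^ 4) :=
        mul_le_mul_of_nonneg_left (two_mul_sub_one_sq_mul_variance_le hm) (by positivity)
    _ = 128 * (m : ℝ) ^ 2 * (2 * m).factorial := by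
        field_simp
        ring

end Halves

theorem statement14 (m : ℕ) (hm : 1 ≤ m)
    (x : Fin (2 * m) → ℝ) (hx : ∀ i : Fin (2 * m), x i = if (i : ℕ) < m then 1 else -1) :
    (1 / (Nat.factorial (2 * m) : ℝ)) * ∑ σ : Equiv.Perm (Fin (2 * m)),
        (Finset.Icc 1 (2 * m - 1)).sup'
          (Finset.nonempty_Icc.mpr (by omega))
          (fun k =>
            |(∑ i ∈ Finset.univ.filter fun i : Fin (2 * m) => (i : ℕ) < k, x (σ i)) ^ 2
              - (k : ℝ) * (2 * (m : ℝ) - k) / (2 * (m : ℝ) - 1)| ^ 2)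
      ≤ 128 * (m : ℝ) ^ 2 := by
  have hsq : ∀ i, x i ^ 2 = 1 := fun i => by rw [hx i]; split_ifs <;> norm_num
  have hsum : ∑ i, x i = 0 := by simp only [hx, sum_ite_lt_eq_zero]
  have hdev : ∀ σ k, k ∈ Icc 1 (2 * m - 1) →
      |(∑ i ∈ univ.filter fun i : Fin (2 * m) => (i : ℕ) < k, x (σ i)) ^ 2
        - (k : ℝ) * (2 * (m : ℝ) - k) / (2 * (m : ℝ) - 1)| ^ 2 = sqDev (2 * m) x k σ :=
    fun σ k hk => by
      rw [sqDev, meanSq, sq_abs, S_eq_sum_filter (by grind) σ]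
      push_cast
      ring
  simp only [fun σ => sup'_congr (nonempty_Icc.mpr (by omega)) rfl (hdev σ)]
  rw [one_div, inv_mul_le_iff₀ (by positivity)]
  rcases hm.eq_or_lt with rfl | hm2
  · refine (sum_nonpos fun σ _ => sup'_le _ _ fun k hk => ?_).trans (by positivity)
    rw [show k = 1 by simpa using hk, sqDev_one hsq le_rfl]
  · exact (sum_sup_sqDev_le hsq hsum hm2).trans_eq (mul_comm _ _)
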